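/- Let 0 < λ < μ and extend D to complex s by the same polynomial formula. Then for s ∈ ℂ one has Im(D(s)) = 0 if and only if Im(s) = 0 or Re(s) = (ζ⁻+ζ⁺)/2; moreover, for every s ∈ ℂ with Re(s) = (ζ⁻+ζ⁺)/2, the value D(s) is a real number and D(s) < 0. -/

import Mathlib

noncomputable section

/-- The complex extension of the quadratic discriminant `D(s)` of the symmetric SQF model. -/
def DqC (lam mu : ℝ) (s : ℂ) : ℂ :=
  ((mu : ℂ) ^ 2 - (lam : ℂ) * mu / 2 + ((mu : ℂ) - lam) * s) ^ 2 +
    2 * (lam : ℂ) * mu * s * ((mu : ℂ) + s)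

/-- The ramification point `ζ⁻`. -/
def zetaMinus (lam mu : ℝ) : ℝ :=
  -mu * (Real.sqrt mu + Real.sqrt (lam / 2)) ^ 2 /
    (lam / 2 + (Real.sqrt mu + Real.sqrt (lam / 2)) ^ 2)

/-- The ramification point `ζ⁺`. -/
def zetaPlus (lam mu : ℝ) : ℝ :=
  -mu * (Real.sqrt mu - Real.sqrt (lam / 2)) ^ 2 /
    (lam / 2 + (Real.sqrt mu - Real.sqrt (lam / 2)) ^ 2)

/-!
`D` is a quadratic `a s² + b s + c` with real coefficients `a = μ² + λ² > 0`,
`b = μ(2μ² - λμ + λ²)`, `c = (μ² - λμ/2)²`, so `Im D(s) = Im s · (2a Re s + b)` vanishes exactly on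
the real axis and on the vertical line through the vertex `-b/(2a)`, which is the midpoint
`(ζ⁻ + ζ⁺)/2`. On that line `Re D(s) = D(-b/2a) - a (Im s)²`, and
`D(-b/2a) = -discrim a b c / (4a) < 0` because `discrim a b c = 2λ³μ³ > 0`.
-/

namespace Complex

variable {a b c : ℝ}

lemma im_quadratic (s : ℂ) :
    ((a : ℂ) * s ^ 2 + b * s + c).im = s.im * (2 * a * s.re + b) := by
  simp only [sq, add_im, mul_im, mul_re, ofReal_re, ofReal_im]
  ring

lemma re_quadratic (s : ℂ) :
    ((a : ℂ) * s ^ 2 + b * s + c).re = a * (s.re ^ 2 - s.im ^ 2) + b * s.re + c := by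
  simp only [sq, add_re, mul_im, mul_re, ofReal_re, ofReal_im]
  ring

lemma im_quadratic_eq_zero_iff (ha : a ≠ 0) (s : ℂ) :
    ((a : ℂ) * s ^ 2 + b * s + c).im = 0 ↔ s.im = 0 ∨ s.re = -b / (2 * a) := by
  rw [im_quadratic, mul_eq_zero, eq_div_iff (mul_ne_zero two_ne_zero ha)]
  exact or_congr Iff.rfl ⟨fun h => by linarith, fun h => by linarith⟩

lemma re_quadratic_neg_of_re_eq_vertex (ha : 0 < a) (hdisc : 0 < discrim a b c) {s : ℂ}
    (hs : s.re = -b / (2 * a)) : ((a : ℂ) * s ^ 2 + b * s + c).re < 0 := by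
  have hvertex : 4 * a * (a * s.re ^ 2 + b * s.re + c) = -discrim a b c := by
    rw [discrim, hs]
    field_simp
    ring
  rw [re_quadratic]
  nlinarith [mul_nonneg ha.le (sq_nonneg s.im)]

end Complex

lemma DqC_eq_quadratic (lam mu : ℝ) (s : ℂ) :
    DqC lam mu s = ((mu ^ 2 + lam ^ 2 : ℝ) : ℂ) * s ^ 2
      + ((mu * (2 * mu ^ 2 - lam * mu + lam ^ 2) : ℝ) : ℂ) * s
      + (((mu ^ 2 - lam * mu / 2) ^ 2 : ℝ) : ℂ) := by
  unfold DqC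
  push_cast
  ring

lemma zetaMinus_add_zetaPlus_div_two {lam mu : ℝ} (hlam : 0 < lam) (hmu : 0 ≤ mu) :
    (zetaMinus lam mu + zetaPlus lam mu) / 2
      = -(mu * (2 * mu ^ 2 - lam * mu + lam ^ 2)) / (2 * (mu ^ 2 + lam ^ 2)) := by
  obtain ⟨u, hu0, rfl⟩ : ∃ u, 0 ≤ u ∧ u ^ 2 = mu := ⟨√mu, Real.sqrt_nonneg _, Real.sq_sqrt hmu⟩
  obtain ⟨v, hv0, hv⟩ : ∃ v, 0 < v ∧ v ^ 2 = lam / 2 :=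
    ⟨√(lam / 2), by positivity, Real.sq_sqrt (by positivity)⟩
  obtain rfl : lam = 2 * v ^ 2 := by linarith
  unfold zetaMinus zetaPlus
  rw [mul_div_cancel_left₀ _ two_ne_zero, Real.sqrt_sq hu0, Real.sqrt_sq hv0.le]
  have hplus : v ^ 2 + (u + v) ^ 2 ≠ 0 := by positivity
  have hminus : v ^ 2 + (u - v) ^ 2 ≠ 0 := by positivity
  have hsum : (u ^ 2) ^ 2 + (2 * v ^ 2) ^ 2 ≠ 0 := by positivity
  field_simp
  ring

theorem stmt_1 (lam mu : ℝ) (hlam : 0 < lam) (hmu : lam < mu) :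
    (∀ s : ℂ, (DqC lam mu s).im = 0 ↔
      s.im = 0 ∨ s.re = (zetaMinus lam mu + zetaPlus lam mu) / 2) ∧
    (∀ s : ℂ, s.re = (zetaMinus lam mu + zetaPlus lam mu) / 2 →
      (DqC lam mu s).im = 0 ∧ (DqC lam mu s).re < 0) := by
  have hmu0 : 0 < mu := hlam.trans hmu
  have ha : 0 < mu ^ 2 + lam ^ 2 := by positivity
  have hdisc : 0 < discrim (mu ^ 2 + lam ^ 2) (mu * (2 * mu ^ 2 - lam * mu + lam ^ 2))
      ((mu ^ 2 - lam * mu / 2) ^ 2) := by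
    rw [discrim]
    nlinarith [mul_pos (pow_pos hlam 3) (pow_pos hmu0 3)]
  simp only [DqC_eq_quadratic, zetaMinus_add_zetaPlus_div_two hlam hmu0.le]
  refine ⟨Complex.im_quadratic_eq_zero_iff ha.ne', fun s hs => ⟨?_, ?_⟩⟩
  · exact (Complex.im_quadratic_eq_zero_iff ha.ne' s).2 (Or.inr hs)
  · exact Complex.re_quadratic_neg_of_re_eq_vertex ha hdisc hs
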